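/- arXiv:2203.13315 — 5 statements merged into one kernel-verified Lean document; each statement's English description precedes it below -/
import Mathlib

section
/- A Tychonoff space X is nearly pseudocompact if and only if X does not contain a C-embedded copy of the discrete space ℕ that is hard in X. -/
open Set Topology

noncomputable section

/-- The Hewitt realcompactification of `X`, as a subset of the Stone–Čech compactification
`βX`: the set of points `p ∈ βX` such that every continuous real-valued function on `X`
extends continuously, with real values, to the subspace `X ∪ {p}` of `βX`. -/
def hewittSet (X : Type*) [TopologicalSpace X] : Set (StoneCech X) :=
  {p | ∀ f : C(X, ℝ),
    ∃ g : C(((insert p (Set.range (stoneCechUnit : X → StoneCech X))) : Set (StoneCech X)), ℝ),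
      ∀ x : X, g ⟨stoneCechUnit x, Set.mem_insert_of_mem _ ⟨x, rfl⟩⟩ = f x}

/-- `K = cl_{βX}(υX \ X)`. -/
def KSet (X : Type*) [TopologicalSpace X] : Set (StoneCech X) :=
  closure (hewittSet X \ Set.range (stoneCechUnit : X → StoneCech X))

/-- `X` is nearly pseudocompact if `υX \ X` is dense in `βX \ X`. -/
def NearlyPseudocompact (X : Type*) [TopologicalSpace X] : Prop :=
  ∀ p : StoneCech X, p ∉ Set.range (stoneCechUnit : X → StoneCech X) →
    p ∈ closure (hewittSet X \ Set.range (stoneCechUnit : X → StoneCech X))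

/-- A subset `H` of `X` is hard in `X` if (its copy in `βX`) is closed in the subspace
`X ∪ K` of `βX`, i.e. `cl_{βX}(H) ∩ (X ∪ K) ⊆ H`. -/
def IsHard {X : Type*} [TopologicalSpace X] (H : Set X) : Prop :=
  closure (stoneCechUnit '' H) ∩ (Set.range (stoneCechUnit : X → StoneCech X) ∪ KSet X)
    ⊆ stoneCechUnit '' H

/-- A subset `S` of `X` is C-embedded in `X` if every continuous real-valued function on `S`
extends to a continuous real-valued function on `X`. -/
def CEmbedded {X : Type*} [TopologicalSpace X] (S : Set X) : Prop :=
  ∀ f : C(S, ℝ), ∃ g : C(X, ℝ), ∀ x : S, g x = f x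

/-!
If `X` is nearly pseudocompact then `X ∪ K = βX`, so a hard subset of `X` is closed in `βX`,
hence compact, and cannot be an infinite discrete space. Conversely, a point
`p ∈ βX \ (X ∪ K)` lies outside `υX`, so some `f ∈ C(X)` is unbounded on every neighbourhood
of `p`. Inside a closed neighbourhood `B` of `p` missing `K` pick points of `X` at which the
values of `f` are `1`-separated: these values form a closed copy of `ℕ` in `ℝ`, so by Tietze
the points form a closed, C-embedded copy of `ℕ`, whose closure in `βX` stays in `B`, so it is
hard.
-/

theorem Topology.IsClosedEmbedding.of_comp_of_t2 {X Y Z : Type*} [TopologicalSpace X]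
    [TopologicalSpace Y] [TopologicalSpace Z] [T2Space Y] {f : X → Y} {g : Y → Z}
    (hf : Continuous f) (hg : Continuous g) (hgf : IsClosedEmbedding (g ∘ f)) :
    IsClosedEmbedding f :=
  .of_continuous_injective_isClosedMap hf hgf.injective.of_comp
    (isProperMap_of_comp_of_t2 hf hg hgf.isProperMap).isClosedMap

theorem exists_seq_pairwise_one_le_dist_of_not_bddAbove {s : Set ℝ} (hs : ¬BddAbove s) :
    ∃ t : ℕ → ℝ, (∀ n, t n ∈ s) ∧ Pairwise fun m n => 1 ≤ dist (t m) (t n) := by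
  choose next hnext hlt using not_bddAbove_iff.mp hs
  let t : ℕ → ℝ := fun n => Nat.rec (next 0) (fun _ prev => next (prev + 1)) n
  have hstep : ∀ n, t n + 1 < t (n + 1) := fun n => hlt (t n + 1)
  have hmono : Monotone fun n : ℕ => t n - n :=
    monotone_nat_of_le_succ fun n => by push_cast; linarith [hstep n]
  refine ⟨t, fun n => by cases n <;> apply hnext, fun m n hmn => ?_⟩
  wlog h : m < n generalizing m n
  · rw [dist_comm]; exact this n m hmn.symm (hmn.symm.lt_of_le (not_lt.mp h))
  have hmn' : (m : ℝ) + 1 ≤ n := by exact_mod_cast h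
  rw [Real.dist_eq, abs_sub_comm, abs_of_nonneg] <;> linarith [hmono h.le]

section

variable {X : Type*} [TopologicalSpace X]

theorem NearlyPseudocompact.isClosed_image_of_isHard (hX : NearlyPseudocompact X) {H : Set X}
    (hH : IsHard H) : IsClosed (stoneCechUnit '' H) := by
  refine closure_subset_iff_isClosed.mp fun q hq => hH ⟨hq, ?_⟩
  by_cases hqX : q ∈ range stoneCechUnit
  · exact Or.inl hqX
  · exact Or.inr (hX q hqX)

theorem NearlyPseudocompact.isCompact_of_isHard [T35Space X] (hX : NearlyPseudocompact X)
    {H : Set X} (hH : IsHard H) : IsCompact H :=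
  isEmbedding_stoneCechUnit.isCompact_iff.mpr (hX.isClosed_image_of_isHard hH).isCompact

theorem isHard_of_isClosed_of_disjoint_KSet [T35Space X] {H : Set X} (hH : IsClosed H)
    (hHK : Disjoint (closure (stoneCechUnit '' H)) (KSet X)) : IsHard H := by
  rintro q ⟨hq, ⟨y, rfl⟩ | hqK⟩
  · refine mem_image_of_mem _ (hH.closure_subset ?_)
    rwa [isInducing_stoneCechUnit.closure_eq_preimage_closure_image]
  · exact absurd hqK (hHK.notMem_of_mem_left hq)

theorem exists_extension_insert_of_ne_bot_of_ne_top {p : StoneCech X} {f : C(X, ℝ)}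
    {F : StoneCech X → EReal} (hF : Continuous F) (hFf : ∀ x, F (stoneCechUnit x) = f x)
    (hbot : F p ≠ ⊥) (htop : F p ≠ ⊤) :
    ∃ g : C(((insert p (range (stoneCechUnit : X → StoneCech X))) : Set (StoneCech X)), ℝ),
      ∀ x : X, g ⟨stoneCechUnit x, mem_insert_of_mem _ ⟨x, rfl⟩⟩ = f x := by
  have hfinite : ∀ q : (insert p (range (stoneCechUnit : X → StoneCech X)) : Set _),
      F q ∈ ({⊥, ⊤}ᶜ : Set EReal) := by
    rintro ⟨q, rfl | ⟨x, rfl⟩⟩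
    · simp [hbot, htop]
    · simp [hFf]
  refine ⟨⟨fun q => (F q).toReal, EReal.continuousOn_toReal.comp_continuous
    (hF.comp continuous_subtype_val) hfinite⟩, fun x => ?_⟩
  simp [hFf]

theorem not_bddAbove_image_preimage_of_eq_top {Y Z : Type*} [TopologicalSpace Y]
    {u : Z → Y} (hu : DenseRange u) {F : Y → EReal} (hF : Continuous F) {f : Z → ℝ}
    (hFf : ∀ x, F (u x) = f x) {p : Y} (hp : F p = ⊤) :
    ∀ V ∈ 𝓝 p, ¬BddAbove (f '' (u ⁻¹' V)) := by
  rintro V hV ⟨M, hM⟩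
  have hW : V ∩ F ⁻¹' Ioi M ∈ 𝓝 p :=
    Filter.inter_mem hV
      (hF.continuousAt.preimage_mem_nhds (Ioi_mem_nhds (hp ▸ EReal.coe_lt_top M)))
  obtain ⟨_, ⟨x, rfl⟩, hxV, hxM⟩ := hu.inter_nhds_nonempty hW
  have hfx : (M : EReal) < f x := hFf x ▸ hxM
  exact (EReal.coe_lt_coe_iff.mp hfx).not_ge (hM (mem_image_of_mem f hxV))

theorem exists_not_bddAbove_of_notMem_hewittSet {p : StoneCech X} (hp : p ∉ hewittSet X) :
    ∃ f : C(X, ℝ), ∀ V ∈ 𝓝 p, ¬BddAbove (f '' (stoneCechUnit ⁻¹' V)) := by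
  obtain ⟨f, hf⟩ := not_forall.mp hp
  have hc : Continuous fun x => (f x : EReal) := continuous_coe_real_ereal.comp f.continuous
  have hF := continuous_stoneCechExtend hc
  have hFf : ∀ x, stoneCechExtend hc (stoneCechUnit x) = f x := stoneCechExtend_stoneCechUnit hc
  -- the extension of `f` to the compact space `EReal` is `±∞` at `p`, or `f` would extend to `p`
  by_cases htop : stoneCechExtend hc p = ⊤
  · exact ⟨f, not_bddAbove_image_preimage_of_eq_top denseRange_stoneCechUnit hF hFf htop⟩
  by_cases hbot : stoneCechExtend hc p = ⊥
  · refine ⟨-f, not_bddAbove_image_preimage_of_eq_top denseRange_stoneCechUnit hF.neg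
      (fun x => ?_) (by rw [Pi.neg_apply, hbot, EReal.neg_bot])⟩
    simp [hFf]
  · exact (hf (exists_extension_insert_of_ne_bot_of_ne_top hF hFf hbot htop)).elim

theorem CEmbedded.range_of_isClosedEmbedding_comp {ι Y : Type*} [TopologicalSpace ι]
    [TopologicalSpace Y] [NormalSpace Y] {xs : ι → X} (hxs : Continuous xs) (g : C(X, Y))
    (hg : IsClosedEmbedding (g ∘ xs)) : CEmbedded (range xs) := by
  intro φ
  obtain ⟨w, hw⟩ :=
    (φ.comp ⟨rangeFactorization xs, hxs.rangeFactorization⟩).exists_extension' hg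
  refine ⟨w.comp g, ?_⟩
  rintro ⟨_, i, rfl⟩
  exact congrFun hw i

end

/-- A Tychonoff space `X` is nearly pseudocompact if and only if `X` does not contain a
C-embedded copy of the discrete space `ℕ` (a countably infinite discrete subspace) that is
hard in `X`. -/
theorem nearlyPseudocompact_iff_no_hard_CEmbedded_copy_of_nat
    (X : Type*) [TopologicalSpace X] [T35Space X] :
    NearlyPseudocompact X ↔
      ¬ ∃ S : Set X, S.Countable ∧ S.Infinite ∧ DiscreteTopology S ∧
        CEmbedded S ∧ IsHard S := by
  constructor
  · rintro hX ⟨S, -, hSinf, hSdisc, -, hShard⟩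
    exact hSinf ((hX.isCompact_of_isHard hShard).finite ⟨hSdisc⟩)
  · intro hno p hpX
    by_contra hpK
    obtain ⟨f, hf⟩ :=
      exists_not_bddAbove_of_notMem_hewittSet fun hp => hpK (subset_closure ⟨hp, hpX⟩)
    obtain ⟨B, hB, hBc, hBK⟩ :=
      exists_mem_nhds_isClosed_subset (isClosed_closure.isOpen_compl.mem_nhds hpK)
    obtain ⟨t, htB, ht⟩ := exists_seq_pairwise_one_le_dist_of_not_bddAbove (hf B hB)
    choose xs hxsB hxst using htB
    have hfxs : IsClosedEmbedding (f ∘ xs) := by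
      rw [show f ∘ xs = t from funext hxst]
      exact Metric.isClosedEmbedding_of_pairwise_le_dist one_pos ht
    have hxs : IsClosedEmbedding xs :=
      hfxs.of_comp_of_t2 continuous_of_discreteTopology f.continuous
    have hcl : closure (stoneCechUnit '' range xs) ⊆ B :=
      closure_minimal (by rintro _ ⟨_, ⟨n, rfl⟩, rfl⟩; exact hxsB n) hBc
    exact hno ⟨range xs, countable_range xs, infinite_range_of_injective hxs.injective,
      hxs.isEmbedding.toHomeomorph.discreteTopology,
      .range_of_isClosedEmbedding_comp hxs.continuous f hfxs,
      isHard_of_isClosed_of_disjoint_KSet hxs.isClosed_range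
        (disjoint_compl_left.mono_left (hcl.trans hBK))⟩
end
end

section
/- If a Tychonoff space X contains a C-embedded copy of the discrete space ℕ that is hard in X, then cl_{βX}(ℕ) \ ℕ ⊆ βX \ (X ∪ K), and consequently |βX \ (X ∪ K)| ≥ 2^𝔠 (so in particular X is not nearly pseudocompact). -/
/-! A countably infinite set carries `2 ^ 𝔠` ultrafilters, since it admits an independent family
indexed by `ℝ`. For a C-embedded discrete `S ⊆ X`, sending an ultrafilter on `S` to its limit in
`βX` is injective: if `A ∈ U` and `Aᶜ ∈ V`, the indicator of `A` extends to `X`, and after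
clipping to `[0, 1]` to `βX`, where it is `1` at the limit of `U` and `0` at that of `V`. These
limits lie in `cl_{βX} S`, and only countably many of them in `S`; hardness of `S` puts the
others outside `X ∪ K`. -/

open Set Topology

noncomputable section

open Filter Cardinal Function

universe u v

def IsIndependentFamily {ι α : Type*} (A : ι → Set α) : Prop :=
  ∀ (J : Set ι) (I : Finset ι), ∃ a, ∀ i ∈ I, (a ∈ A i ↔ i ∈ J)

namespace IsIndependentFamily

variable {ι : Type u} {α : Type v} {A : ι → Set α}

theorem preimage {β : Type*} (hA : IsIndependentFamily A) {f : β → α} (hf : Surjective f) :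
    IsIndependentFamily fun i => f ⁻¹' A i := fun J I => by
  obtain ⟨a, ha⟩ := hA J I
  obtain ⟨b, rfl⟩ := hf a
  exact ⟨b, ha⟩

theorem exists_ultrafilter (hA : IsIndependentFamily A) (J : Set ι) :
    ∃ U : Ultrafilter α, ∀ i, {a | a ∈ A i ↔ i ∈ J} ∈ U := by
  classical
  obtain ⟨U, hU⟩ := Ultrafilter.exists_ultrafilter_of_finite_inter_nonempty
    (range fun i => {a | a ∈ A i ↔ i ∈ J}) fun T hT => by
      obtain ⟨I, -, rfl⟩ := Finset.subset_set_image_iff.mp (image_univ ▸ hT)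
      obtain ⟨a, ha⟩ := hA J I
      exact ⟨a, by simpa using ha⟩
  exact ⟨U, fun i => hU (mem_range_self i)⟩

theorem lift_mk_set_le (hA : IsIndependentFamily A) :
    lift.{v} #(Set ι) ≤ lift.{u} #(Ultrafilter α) := by
  choose U hU using hA.exists_ultrafilter
  refine lift_mk_le'.mpr ⟨⟨U, fun J J' hJJ' => Set.ext fun i => ?_⟩⟩
  obtain ⟨a, haJ, haJ'⟩ := Ultrafilter.nonempty_of_mem
    (inter_mem (f := (U J : Filter α)) (hU J i) (hJJ' ▸ hU J' i))
  exact haJ.symm.trans haJ'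

end IsIndependentFamily

theorem exists_finset_rat_injOn_filter_lt (I : Finset ℝ) :
    ∃ F : Finset ℚ, InjOn (fun r : ℝ => F.filter fun q : ℚ => (q : ℝ) < r) I := by
  classical
  choose c hc using fun p : ℝ × ℝ => (em (p.1 < p.2)).elim
    (fun h => (exists_rat_btwn h).imp fun _ hq _ => hq) fun h => ⟨0, fun h' => absurd h' h⟩
  refine ⟨(I ×ˢ I).image c, fun r hr s hs hrs => ?_⟩
  have separated : ∀ r ∈ I, ∀ s ∈ I, r < s →
      ((I ×ˢ I).image c).filter (fun q : ℚ => (q : ℝ) < r) ≠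
        ((I ×ˢ I).image c).filter (fun q : ℚ => (q : ℝ) < s) := by
    intro r hr s hs hlt heq
    obtain ⟨hrq, hqs⟩ := hc (r, s) hlt
    have hq : c (r, s) ∈ ((I ×ˢ I).image c).filter (fun q : ℚ => (q : ℝ) < s) :=
      Finset.mem_filter.mpr ⟨Finset.mem_image_of_mem _ (Finset.mem_product.mpr ⟨hr, hs⟩), hqs⟩
    rw [← heq, Finset.mem_filter] at hq
    exact hrq.not_gt hq.2
  rcases lt_trichotomy r s with hlt | heq | hgt
  · exact absurd hrs (separated r hr s hs hlt)
  · exact heq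
  · exact absurd hrs.symm (separated s hs r hr hgt)

/-- The points are pairs `(F, 𝒜)` of a finite set of rationals and a finite family of subsets
of `F`; the `r`-th set asks that the part of `F` below `r` be one of the members of `𝒜`. -/
theorem isIndependentFamily_finset_rat :
    IsIndependentFamily fun r : ℝ =>
      {d : Finset ℚ × Finset (Finset ℚ) | d.1.filter (fun q : ℚ => (q : ℝ) < r) ∈ d.2} := by
  classical
  intro J I
  obtain ⟨F, hF⟩ := exists_finset_rat_injOn_filter_lt I
  refine ⟨(F, (I.filter (· ∈ J)).image fun r => F.filter fun q : ℚ => (q : ℝ) < r), fun r hr => ?_⟩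
  simp only [mem_ofPred_eq, Finset.mem_image, Finset.mem_filter]
  constructor
  · rintro ⟨s, ⟨hs, hsJ⟩, hsr⟩
    exact hF hs hr hsr ▸ hsJ
  · exact fun hrJ => ⟨r, ⟨hr, hrJ⟩, rfl⟩

theorem two_pow_continuum_le_mk_ultrafilter (α : Type u) [Countable α] [Infinite α] :
    2 ^ 𝔠 ≤ #(Ultrafilter α) := by
  obtain ⟨e⟩ : Nonempty (α ≃ Finset ℚ × Finset (Finset ℚ)) := nonempty_equiv_of_countable
  have := (isIndependentFamily_finset_rat.preimage e.surjective).lift_mk_set_le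
  rwa [lift_uzero, mk_set, mk_real, lift_two_power, lift_continuum] at this

theorem Cardinal.le_mk_sdiff_of_countable {β : Type u} {κ : Cardinal.{u}} (hκ : ℵ₀ < κ)
    {s t : Set β} (hs : κ ≤ #s) (ht : t.Countable) : κ ≤ #↥(s \ t) := by
  by_contra! h
  exact (hs.trans (le_mk_sdiff_add_mk s t)).not_gt
    (add_lt_of_lt hκ.le h (ht.le_aleph0.trans_lt hκ))

namespace Ultrafilter

variable {α Y Z : Type*} [TopologicalSpace Z] [CompactSpace Z]

theorem lim_map_mem_closure_range (U : Ultrafilter α) (j : α → Z) :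
    (U.map j).lim ∈ closure (range j) :=
  mem_closure_of_tendsto (le_nhds_lim (U.map j)) (Eventually.of_forall mem_range_self)

theorem apply_lim_map_eq [TopologicalSpace Y] [T2Space Y] {G : Z → Y} (hG : Continuous G)
    {U : Ultrafilter α} {j : α → Z} {c : Y} (h : ∀ᶠ a in U, G (j a) = c) :
    G (U.map j).lim = c :=
  tendsto_nhds_unique (((hG.tendsto _).comp (le_nhds_lim (U.map j))))
    (tendsto_const_nhds.congr' (h.mono fun _ ha => ha.symm))

end Ultrafilter

namespace CEmbedded

variable {X : Type u} [TopologicalSpace X] {S : Set X} [DiscreteTopology S]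

theorem exists_unitInterval_indicator (hC : CEmbedded S) (A : Set S) :
    ∃ h : X → unitInterval, Continuous h ∧ (∀ s ∈ A, h s = 1) ∧ ∀ s ∉ A, h s = 0 := by
  classical
  obtain ⟨g, hg⟩ := hC ⟨A.indicator 1, continuous_of_discreteTopology⟩
  refine ⟨projIcc 0 1 zero_le_one ∘ g, continuous_projIcc.comp g.continuous,
    fun s hs => ?_, fun s hs => ?_⟩
  · simp only [comp_apply, hg, ContinuousMap.coe_mk, indicator_of_mem hs, Pi.one_apply]
    exact projIcc_right zero_le_one
  · simp only [comp_apply, hg, ContinuousMap.coe_mk, indicator_of_notMem hs]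
    exact projIcc_left zero_le_one

theorem injective_lim_map (hC : CEmbedded S) :
    Injective fun U : Ultrafilter S => (U.map fun s : S => stoneCechUnit (s : X)).lim := by
  intro U V hUV
  dsimp only at hUV
  refine Ultrafilter.eq_of_le fun A hAV => ?_
  by_contra hAU
  obtain ⟨h, hcont, h_one, h_zero⟩ := hC.exists_unitInterval_indicator A
  have hG := continuous_stoneCechExtend hcont
  have hV : stoneCechExtend hcont (V.map fun s : S => stoneCechUnit (s : X)).lim = 1 :=
    Ultrafilter.apply_lim_map_eq hG (Filter.mem_of_superset hAV fun s hs => by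
      simp [stoneCechExtend_stoneCechUnit, h_one s hs])
  have hU : stoneCechExtend hcont (U.map fun s : S => stoneCechUnit (s : X)).lim = 0 :=
    Ultrafilter.apply_lim_map_eq hG (Filter.mem_of_superset
      (Ultrafilter.compl_mem_iff_notMem.mpr hAU) fun s hs => by
        simp [stoneCechExtend_stoneCechUnit, h_zero s hs])
  rw [hUV] at hU
  exact zero_ne_one (hU.symm.trans hV)

theorem two_pow_continuum_le_mk_closure_sdiff (hC : CEmbedded S) (hcount : S.Countable)
    (hinf : S.Infinite) :
    2 ^ 𝔠 ≤ #↥(closure (stoneCechUnit '' S) \ stoneCechUnit '' S) := by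
  have : Countable S := hcount.to_subtype
  have : Infinite S := hinf.to_subtype
  have hlim (U : Ultrafilter S) :
      (U.map fun s : S => stoneCechUnit (s : X)).lim ∈ closure (stoneCechUnit '' S) := by
    simpa only [image_eq_range] using
      U.lim_map_mem_closure_range fun s : S => stoneCechUnit (s : X)
  refine le_mk_sdiff_of_countable ((aleph0_le_continuum.trans_lt (cantor 𝔠)).trans_eq
    (by norm_num)) ?_ (hcount.image _)
  calc 2 ^ 𝔠 ≤ #(Ultrafilter S) := two_pow_continuum_le_mk_ultrafilter S
    _ ≤ #↥(closure (stoneCechUnit '' S)) := mk_le_of_injective (f := fun U => ⟨_, hlim U⟩)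
      fun _ _ h => hC.injective_lim_map (congrArg Subtype.val h)

end CEmbedded

theorem not_nearlyPseudocompact_of_hard_CEmbedded_copy_of_nat_general
    (X : Type*) [TopologicalSpace X] (S : Set X)
    (hcount : S.Countable) (hinf : S.Infinite) (hdisc : DiscreteTopology S)
    (hC : CEmbedded S) (hhard : IsHard S) :
    closure (stoneCechUnit '' S) \ (stoneCechUnit '' S) ⊆
        (Set.range (stoneCechUnit : X → StoneCech X) ∪ KSet X)ᶜ ∧
      2 ^ Cardinal.continuum ≤
        Cardinal.mk ↥((Set.range (stoneCechUnit : X → StoneCech X) ∪ KSet X)ᶜ) ∧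
      ¬ NearlyPseudocompact X := by
  have hremainder : closure (stoneCechUnit '' S) \ stoneCechUnit '' S ⊆
      (range (stoneCechUnit : X → StoneCech X) ∪ KSet X)ᶜ :=
    fun p hp hpK => hp.2 (hhard ⟨hp.1, hpK⟩)
  have hcard := (hC.two_pow_continuum_le_mk_closure_sdiff hcount hinf).trans
    (mk_le_mk_of_subset hremainder)
  refine ⟨hremainder, hcard, fun hNPC => ?_⟩
  obtain ⟨p, hp⟩ : (range (stoneCechUnit : X → StoneCech X) ∪ KSet X)ᶜ.Nonempty :=
    nonempty_coe_sort.mp <| mk_ne_zero_iff.mp <|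
      ne_bot_of_le_ne_bot (power_ne_zero _ two_ne_zero) hcard
  exact hp (Or.inr (hNPC p fun hpX => hp (Or.inl hpX)))

/-- If a Tychonoff space `X` contains a C-embedded copy `S` of the discrete space `ℕ` that is
hard in `X`, then `cl_{βX}(S) \ S ⊆ βX \ (X ∪ K)`, consequently `|βX \ (X ∪ K)| ≥ 2^𝔠`, and
in particular `X` is not nearly pseudocompact. -/
theorem not_nearlyPseudocompact_of_hard_CEmbedded_copy_of_nat
    (X : Type*) [TopologicalSpace X] [T35Space X] (S : Set X)
    (hcount : S.Countable) (hinf : S.Infinite) (hdisc : DiscreteTopology S)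
    (hC : CEmbedded S) (hhard : IsHard S) :
    closure (stoneCechUnit '' S) \ (stoneCechUnit '' S) ⊆
        (Set.range (stoneCechUnit : X → StoneCech X) ∪ KSet X)ᶜ ∧
      2 ^ Cardinal.continuum ≤
        Cardinal.mk ↥((Set.range (stoneCechUnit : X → StoneCech X) ∪ KSet X)ᶜ) ∧
      ¬ NearlyPseudocompact X :=
  not_nearlyPseudocompact_of_hard_CEmbedded_copy_of_nat_general X S hcount hinf hdisc hC hhard
end
end

section
/- A Tychonoff space X is nearly pseudocompact if and only if every family of nonempty subsets of X that are hard in X and has the finite intersection property has nonempty intersection. -/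
open Set Topology

noncomputable section

/-!
If `υX \ X` is dense in `βX \ X`, then `X ∪ K = βX`, so a hard set is closed in `βX`; for a
family of hard sets with the finite intersection property, compactness of `βX` gives a common
point of their closures, which then lies in `X`. Conversely, a point `p ∈ βX \ (X ∪ K)` is not in
`υX`, which yields a continuous `φ : βX → ℝ` vanishing at `p`, positive on `X` and `≥ 1` on `K`.
Its sublevel sets `{x ∈ X | φ x ≤ ε}`, `0 < ε < 1`, are nonempty, hard and nested, but have
empty intersection.
-/

open Function

theorem sInter_nonempty_of_isClosed_image {X Y : Type*} [TopologicalSpace Y] [CompactSpace Y]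
    {e : X → Y} (he : Injective e) {F : Set (Set X)} (hF : ∀ H ∈ F, IsClosed (e '' H))
    (hfip : ∀ G ⊆ F, G.Finite → (⋂₀ G).Nonempty) : (⋂₀ F).Nonempty := by
  rcases F.eq_empty_or_nonempty with rfl | ⟨H₀, hH₀⟩
  · exact hfip ∅ le_rfl finite_empty
  have : Nonempty F := ⟨⟨H₀, hH₀⟩⟩
  have hne : (⋂ H : F, e '' H).Nonempty := by
    refine CompactSpace.iInter_nonempty (fun H => hF H H.2) fun s => ?_
    obtain ⟨x, hx⟩ := hfip _ (image_subset_iff.2 fun H _ => H.2) (s.finite_toSet.image _)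
    exact ⟨e x, mem_iInter₂.2 fun H hH => mem_image_of_mem e (hx H (mem_image_of_mem _ hH))⟩
  rw [← he.injOn.image_iInter_eq, ← sInter_eq_iInter] at hne
  exact hne.of_image

theorem Directed.sInter_nonempty_of_subset_range {ι α : Type*} [Nonempty ι] {H : ι → Set α}
    (hd : Directed (· ⊇ ·) H) (hne : ∀ i, (H i).Nonempty) {G : Set (Set α)}
    (hG : G ⊆ range H) (hfin : G.Finite) : (⋂₀ G).Nonempty := by
  have := hfin.to_subtype
  choose g hg using fun A : G => hG A.2
  obtain ⟨z, hz⟩ := hd.finite_le g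
  exact (hne z).mono fun x hx A hA => by simpa only [hg] using hz ⟨A, hA⟩ hx

theorem exists_stoneCech_extension_of_mem_Icc {X : Type*} [TopologicalSpace X] {f : X → ℝ}
    (hf : Continuous f) {a b : ℝ} (hab : ∀ x, f x ∈ Icc a b) :
    ∃ g : C(StoneCech X, ℝ), ∀ x, g (stoneCechUnit x) = f x := by
  have hf' : Continuous (codRestrict f (Icc a b) hab) := hf.codRestrict hab
  exact ⟨⟨_, continuous_subtype_val.comp (continuous_stoneCechExtend hf')⟩,
    fun x => congrArg Subtype.val (congrFun (stoneCechExtend_extends hf') x)⟩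

section StoneCech

variable {X : Type*} [TopologicalSpace X]

theorem IsHard.isClosed_image {H : Set X} (hH : IsHard H) (hX : NearlyPseudocompact X) :
    IsClosed (stoneCechUnit '' H) :=
  isClosed_of_closure_subset fun q hq => hH ⟨hq, or_iff_not_imp_left.2 (hX q)⟩

theorem isHard_setOf_le (φ : C(StoneCech X, ℝ)) {ε : ℝ} (hK : ∀ q ∈ KSet X, ε < φ q) :
    IsHard {x : X | φ (stoneCechUnit x) ≤ ε} := by
  rintro q ⟨hq, hqX | hqK⟩
  all_goals
    have hqε : φ q ≤ ε := by
      refine closure_minimal ?_ (isClosed_le φ.continuous continuous_const) hq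
      rintro _ ⟨x, hx, rfl⟩
      exact hx
  · obtain ⟨x, rfl⟩ := hqX
    exact ⟨x, hqε, rfl⟩
  · exact absurd hqε (hK q hqK).not_ge

theorem exists_stoneCech_eq_zero_of_notMem_hewittSet {p : StoneCech X} (hp : p ∉ hewittSet X) :
    ∃ g : C(StoneCech X, ℝ), g p = 0 ∧ ∀ x, 0 < g (stoneCechUnit x) := by
  contrapose! hp
  intro f
  have hw : ∀ x, 0 < 1 + |f x| := fun x => by positivity
  obtain ⟨u, hu⟩ := exists_stoneCech_extension_of_mem_Icc (a := 0) (b := 1)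
    (f := fun x => (1 + |f x|)⁻¹) (by fun_prop (disch := exact fun x => (hw x).ne'))
    fun x => ⟨by positivity, inv_le_one_of_one_le₀ (by simp)⟩
  obtain ⟨v, hv⟩ := exists_stoneCech_extension_of_mem_Icc (a := -1) (b := 1)
    (f := fun x => f x / (1 + |f x|)) (by fun_prop (disch := exact fun x => (hw x).ne'))
    fun x => abs_le.1 <| by rw [abs_div, abs_of_pos (hw x), div_le_one (hw x)]; linarith
  have hu_ne : ∀ s ∈ insert p (range (stoneCechUnit : X → StoneCech X)), u s ≠ 0 := by
    rintro s (rfl | ⟨x, rfl⟩)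
    · intro hup
      obtain ⟨x, hx⟩ := hp u hup
      exact hx.not_gt (by rw [hu]; positivity)
    · rw [hu]; exact inv_ne_zero (hw x).ne'
  -- `f = v / u` on `X`
  refine ⟨⟨fun s => v s / u s, by fun_prop (disch := exact fun s => hu_ne s s.2)⟩, fun x => ?_⟩
  simp only [ContinuousMap.coe_mk, hu, hv]
  field_simp [(hw x).ne']

theorem exists_stoneCech_zero_pos_one_of_notMem {p : StoneCech X}
    (hpX : p ∉ range (stoneCechUnit : X → StoneCech X)) (hpK : p ∉ KSet X) :
    ∃ φ : C(StoneCech X, ℝ), φ p = 0 ∧ (∀ x, 0 < φ (stoneCechUnit x)) ∧ ∀ q ∈ KSet X, 1 ≤ φ q := by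
  obtain ⟨g, hgp, hgX⟩ := exists_stoneCech_eq_zero_of_notMem_hewittSet
    fun hp => hpK (subset_closure ⟨hp, hpX⟩)
  obtain ⟨h, hhp, hhK, -⟩ := exists_continuous_zero_one_of_isClosed isClosed_singleton
    isClosed_closure (disjoint_singleton_left.2 hpK)
  refine ⟨g ⊔ h, ?_, fun x => lt_sup_of_lt_left (hgX x), fun q hq => le_sup_of_le_right ?_⟩
  · simp [hgp, hhp rfl]
  · simp [hhK hq]

theorem nearlyPseudocompact_of_hard_fip
    (hX : ∀ F : Set (Set X), (∀ H ∈ F, H.Nonempty ∧ IsHard H) →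
      (∀ G ⊆ F, G.Finite → (⋂₀ G).Nonempty) → (⋂₀ F).Nonempty) :
    NearlyPseudocompact X := by
  intro p hpX
  by_contra hpK
  obtain ⟨φ, hφp, hφX, hφK⟩ := exists_stoneCech_zero_pos_one_of_notMem hpX hpK
  set S : ℕ → Set X := fun n => {x | φ (stoneCechUnit x) ≤ 1 / (n + 2)}
  have hS_ne : ∀ n, (S n).Nonempty := fun n => by
    have hp : φ p < 1 / (n + 2) := by rw [hφp]; positivity
    obtain ⟨x, hx⟩ := denseRange_stoneCechUnit.exists_mem_open
      (isOpen_lt φ.continuous continuous_const) ⟨p, hp⟩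
    exact ⟨x, show φ _ ≤ _ from le_of_lt hx⟩
  have hS_hard : ∀ n : ℕ, IsHard (S n) := fun n => by
    have hn : (1 : ℝ) / (n + 2) < 1 := by rw [div_lt_one (by positivity)]; linarith
    exact isHard_setOf_le φ fun q hq => hn.trans_le (hφK q hq)
  have hS_anti : Antitone S := fun m n hmn x hx => by
    refine (show φ _ ≤ _ from hx).trans ?_
    gcongr
  obtain ⟨x, hx⟩ := hX (range S) (forall_mem_range.2 fun n => ⟨hS_ne n, hS_hard n⟩)
    fun G hG hGfin => hS_anti.directed_ge.sInter_nonempty_of_subset_range hS_ne hG hGfin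
  obtain ⟨n, hn⟩ := exists_nat_one_div_lt (hφX x)
  have hxn : φ (stoneCechUnit x) ≤ 1 / (n + 2) := hx _ ⟨n, rfl⟩
  have : (1 : ℝ) / (n + 2) ≤ 1 / (n + 1) := by gcongr; linarith
  linarith

end StoneCech

/-- A Tychonoff space `X` is nearly pseudocompact if and only if every family of nonempty
subsets of `X` that are hard in `X` and has the finite intersection property has nonempty
intersection. -/
theorem nearlyPseudocompact_iff_hard_fip
    (X : Type*) [TopologicalSpace X] [T35Space X] :
    NearlyPseudocompact X ↔
      ∀ F : Set (Set X), (∀ H ∈ F, H.Nonempty ∧ IsHard H) →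
        (∀ G ⊆ F, G.Finite → (⋂₀ G).Nonempty) → (⋂₀ F).Nonempty := by
  refine ⟨fun hX F hF hfip => ?_, nearlyPseudocompact_of_hard_fip⟩
  exact sInter_nonempty_of_isClosed_image injective_stoneCechUnit_of_t35Space
    (fun H hH => (hF H hH).2.isClosed_image hX) hfip
end
end

section
/- A Tychonoff space X is nearly pseudocompact if and only if C_H(X) ⊆ C*(X), i.e., every continuous real-valued function f on X for which cl_X(X \ Z(f)) is hard in X is bounded. -/
open Set Topology

noncomputable section

/-!
Extend `f ∈ C(X)` to `F : βX → [-∞, ∞]`. Then `f` is unbounded iff `F` takes an infinite value,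
and `p ∈ βX \ X` lies outside `υX` iff some such `F` is infinite at `p`.

If `X` is nearly pseudocompact and `f` is unbounded with hard support `H = cl_X(X \ Z(f))`, pick
`p` with `F p` infinite: then `p ∈ cl_{βX} H`, and `p ∈ βX \ X ⊆ K`, so hardness puts `p` in `X`,
which is absurd. Conversely, if `p ∈ βX \ X` lies outside `K`, choose `g ∈ C(X)` whose extension
is infinite at `p` and an Urysohn function `φ` on `βX` with `φ p = 1` and support away from `K`;
then `φ|_X · g` has hard support but is unbounded near `p`.
-/

section

variable {X : Type*} [TopologicalSpace X]

lemma mem_closure_image_stoneCechUnit_preimage {Y : Type*} [TopologicalSpace Y]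
    {F : StoneCech X → Y} (hF : Continuous F) {g : X → Y} (hFg : F ∘ stoneCechUnit = g)
    {V : Set Y} (hV : IsOpen V) {p : StoneCech X} (hp : F p ∈ V) :
    p ∈ closure (stoneCechUnit '' (g ⁻¹' V)) := by
  have := denseRange_stoneCechUnit.open_subset_closure_inter (hV.preimage hF) hp
  rwa [← image_preimage_eq_inter_range, ← preimage_comp, hFg] at this

namespace ContinuousMap

def stoneCechEReal (f : C(X, ℝ)) : C(StoneCech X, EReal) :=
  ⟨stoneCechExtend (continuous_coe_real_ereal.comp f.continuous), continuous_stoneCechExtend _⟩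

@[simp]
lemma stoneCechEReal_stoneCechUnit (f : C(X, ℝ)) (x : X) :
    f.stoneCechEReal (stoneCechUnit x) = f x :=
  congrFun (stoneCechExtend_extends (continuous_coe_real_ereal.comp f.continuous)) x

lemma continuousOn_toReal_stoneCechEReal (f : C(X, ℝ)) {s : Set (StoneCech X)}
    (hs : MapsTo f.stoneCechEReal s {⊥, ⊤}ᶜ) :
    ContinuousOn (fun q ↦ (f.stoneCechEReal q).toReal) s :=
  EReal.continuousOn_toReal.comp f.stoneCechEReal.continuous.continuousOn hs

lemma exists_stoneCechEReal_mem_of_not_bounded (f : C(X, ℝ))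
    (hf : ¬ ∃ B : ℝ, ∀ x, |f x| ≤ B) : ∃ p, f.stoneCechEReal p ∈ ({⊥, ⊤} : Set EReal) := by
  by_contra! hfin
  obtain ⟨B, hB⟩ := isCompact_univ.exists_bound_of_continuousOn
    (f.continuousOn_toReal_stoneCechEReal fun q _ ↦ hfin q)
  exact hf ⟨B, fun x ↦ by simpa using hB (stoneCechUnit x) (mem_univ _)⟩

end ContinuousMap

lemma mem_hewittSet_of_forall_stoneCechEReal_notMem {p : StoneCech X}
    (hp : ∀ f : C(X, ℝ), f.stoneCechEReal p ∉ ({⊥, ⊤} : Set EReal)) : p ∈ hewittSet X := by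
  intro f
  have hfin : MapsTo f.stoneCechEReal (insert p (range stoneCechUnit)) {⊥, ⊤}ᶜ := by
    rintro _ (rfl | ⟨x, rfl⟩)
    · exact hp f
    · simp
  exact ⟨⟨_, (f.continuousOn_toReal_stoneCechEReal hfin).domRestrict⟩, fun x ↦ by simp⟩

lemma exists_mem_closure_support_notMem_range_of_not_bounded (f : C(X, ℝ))
    (hf : ¬ ∃ B : ℝ, ∀ x, |f x| ≤ B) :
    ∃ p ∉ range (stoneCechUnit : X → StoneCech X),
      p ∈ closure (stoneCechUnit '' {x | f x ≠ 0}) := by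
  obtain ⟨p, hp⟩ := f.exists_stoneCechEReal_mem_of_not_bounded hf
  refine ⟨p, ?_, ?_⟩
  · rintro ⟨x, rfl⟩
    simp at hp
  · have hp0 : f.stoneCechEReal p ∈ ({0}ᶜ : Set EReal) := by
      rintro h
      rw [mem_singleton_iff.mp h] at hp
      simp at hp
    convert mem_closure_image_stoneCechUnit_preimage f.stoneCechEReal.continuous
      (funext f.stoneCechEReal_stoneCechUnit) isOpen_compl_singleton hp0 using 3
    ext x
    simp

lemma not_bounded_mul_of_stoneCechEReal_mem {g : C(X, ℝ)} {p : StoneCech X}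
    (hg : g.stoneCechEReal p ∈ ({⊥, ⊤} : Set EReal)) {φ : C(StoneCech X, ℝ)} (hφ : φ p ≠ 0) :
    ¬ ∃ B : ℝ, ∀ x, |φ (stoneCechUnit x) * g x| ≤ B := by
  rintro ⟨B, hB⟩
  set a := |φ p| / 2
  have ha : 0 < a := by positivity
  let V : Set EReal := Iio ((-(B / a) : ℝ) : EReal) ∪ Ioi ((B / a : ℝ) : EReal)
  have hW : IsOpen ({q | a < |φ q|} ∩ g.stoneCechEReal ⁻¹' V) :=
    (isOpen_lt continuous_const φ.continuous.abs).inter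
      ((isOpen_Iio.union isOpen_Ioi).preimage g.stoneCechEReal.continuous)
  have hpW : p ∈ {q | a < |φ q|} ∩ g.stoneCechEReal ⁻¹' V := by
    refine ⟨half_lt_self (abs_pos.mpr hφ), ?_⟩
    obtain h | h : g.stoneCechEReal p = ⊥ ∨ g.stoneCechEReal p = ⊤ := hg
    · exact Or.inl (h ▸ EReal.bot_lt_coe _)
    · exact Or.inr (h ▸ EReal.coe_lt_top _)
  obtain ⟨x, hxφ, hxg⟩ := denseRange_stoneCechUnit.exists_mem_open hW ⟨p, hpW⟩
  have hgx : B / a < |g x| := by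
    simp only [mem_preimage, ContinuousMap.stoneCechEReal_stoneCechUnit, V, mem_union, mem_Iio,
      mem_Ioi, EReal.coe_lt_coe_iff] at hxg
    exact lt_abs.mpr (hxg.symm.imp id (fun h ↦ by linarith))
  have hxφ : a < |φ (stoneCechUnit x)| := hxφ
  refine lt_irrefl B ?_
  calc B < a * |g x| := by rwa [div_lt_iff₀' ha] at hgx
    _ ≤ |φ (stoneCechUnit x)| * |g x| := by gcongr
    _ = |φ (stoneCechUnit x) * g x| := (abs_mul _ _).symm
    _ ≤ B := hB x

lemma isHard_of_disjoint_kSet [T35Space X] {H : Set X} (hH : IsClosed H)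
    (hK : Disjoint (closure (stoneCechUnit '' H)) (KSet X)) : IsHard H := by
  rintro q ⟨hqH, ⟨x, rfl⟩ | hqK⟩
  · refine ⟨x, ?_, rfl⟩
    rw [← hH.closure_eq, isEmbedding_stoneCechUnit.closure_eq_preimage_closure_image]
    exact hqH
  · exact (hK.ne_of_mem hqH hqK rfl).elim

lemma isHard_closure_support_mul [T35Space X] {φ : C(StoneCech X, ℝ)}
    (hφ : Disjoint (tsupport φ) (KSet X)) (g : C(X, ℝ)) :
    IsHard (closure {x | φ (stoneCechUnit x) * g x ≠ 0}) := by
  refine isHard_of_disjoint_kSet isClosed_closure (hφ.mono_left ?_)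
  rw [closure_image_closure continuous_stoneCechUnit]
  refine closure_mono ?_
  rintro _ ⟨x, hx, rfl⟩
  exact left_ne_zero_of_mul hx

end

/-- A Tychonoff space `X` is nearly pseudocompact if and only if `C_H(X) ⊆ C*(X)`, i.e. every
continuous real-valued function `f` on `X` for which `cl_X(X \ Z(f))` is hard in `X` is
bounded. -/
theorem nearlyPseudocompact_iff_CH_subset_Cstar
    (X : Type*) [TopologicalSpace X] [T35Space X] :
    NearlyPseudocompact X ↔
      ∀ f : C(X, ℝ), IsHard (closure {x | f x ≠ 0}) → ∃ B : ℝ, ∀ x : X, |f x| ≤ B := by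
  constructor
  · intro hNP f hhard
    by_contra hf
    obtain ⟨p, hpX, hpf⟩ := exists_mem_closure_support_notMem_range_of_not_bounded f hf
    have hpK : p ∈ KSet X := hNP p hpX
    obtain ⟨x, -, rfl⟩ := hhard ⟨closure_mono (image_mono subset_closure) hpf, Or.inr hpK⟩
    exact hpX ⟨x, rfl⟩
  · intro hCH p hpX
    by_contra hpK
    obtain ⟨g, hg⟩ : ∃ g : C(X, ℝ), g.stoneCechEReal p ∈ ({⊥, ⊤} : Set EReal) := by
      by_contra! hfin
      exact hpK (subset_closure ⟨mem_hewittSet_of_forall_stoneCechEReal_notMem hfin, hpX⟩)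
    obtain ⟨φ, hφK, hφp, -⟩ := exists_tsupport_one_of_isOpen_isClosed isClosed_closure.isOpen_compl
      isClosed_closure.isCompact isClosed_singleton (singleton_subset_iff.mpr hpK)
    let f : C(X, ℝ) := φ.comp ⟨stoneCechUnit, continuous_stoneCechUnit⟩ * g
    have hf : IsHard (closure {x | f x ≠ 0}) :=
      isHard_closure_support_mul (subset_compl_iff_disjoint_right.mp hφK) g
    exact not_bounded_mul_of_stoneCechEReal_mem hg (by simp [hφp rfl]) (hCH f hf)
end
end

section
/- For a Tychonoff space X, υ_{C_H} X = X ∪ K, where υ_{C_H} X = {p ∈ βX : f*(p) ∈ ℝ for all f ∈ C_H(X)} and K = cl_{βX}(υX \ X). -/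
open Set Topology

noncomputable section

/-- Composing `f : C(X, ℝ)` with a homeomorphism `φ` of `ℝ` onto `(0,1)` and extending the
resulting bounded function continuously to `βX`, with values in `[0,1]`. -/
def starExt {X : Type*} [TopologicalSpace X] (φ : ℝ ≃ₜ (Set.Ioo (0 : ℝ) 1)) (f : C(X, ℝ)) :
    StoneCech X → Set.Icc (0 : ℝ) 1 :=
  stoneCechExtend
    (Continuous.subtype_mk
      (continuous_subtype_val.comp (φ.continuous.comp f.continuous))
      (fun x => ⟨(φ (f x)).2.1.le, (φ (f x)).2.2.le⟩) :
      Continuous fun x : X =>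
        (⟨(φ (f x) : ℝ), ⟨(φ (f x)).2.1.le, (φ (f x)).2.2.le⟩⟩ : Set.Icc (0 : ℝ) 1))

/-- For `f ∈ C(X, ℝ)` and `p ∈ βX`, the statement `f*(p) ∈ ℝ`: composing `f` with a
homeomorphism of `ℝ` onto `(0,1)` and extending the resulting bounded function continuously
to `βX` (with values in `[0,1]`), the value of this extension at `p` lies in `(0,1)`. -/
def RealAt {X : Type*} [TopologicalSpace X] (f : C(X, ℝ)) (p : StoneCech X) : Prop :=
  ∀ φ : ℝ ≃ₜ (Set.Ioo (0 : ℝ) 1), (starExt φ f p : ℝ) ∈ Set.Ioo (0 : ℝ) 1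

/-- `C_H(X)`: the continuous real-valued functions `f` on `X` whose support
`cl_X(X \ Z(f))` is hard in `X`. -/
def CHSet (X : Type*) [TopologicalSpace X] : Set C(X, ℝ) :=
  {f | IsHard (closure {x | f x ≠ 0})}

/-- `υ_A X = {p ∈ βX : f*(p) ∈ ℝ for all f ∈ A}`. -/
def upsilonOf {X : Type*} [TopologicalSpace X] (A : Set C(X, ℝ)) : Set (StoneCech X) :=
  {p | ∀ f ∈ A, RealAt f p}

/-! Both inclusions rest on the locality of `f ↦ f*(p)`: it only depends on the values of `f`
on the trace on `X` of a neighbourhood of `p`. A function with hard support vanishes near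
every point of `K \ X`, so `f*(p) = φ 0` there. Conversely, if `p ∉ X ∪ K` then `p ∉ υX`, so
some `f₀` has `f₀*(p) ∉ ℝ`; multiplying `f₀` by an Urysohn function of `βX` that is `1` near
`p` and vanishes off a closed neighbourhood of `p` missing `K` gives a function with hard
support which agrees with `f₀` near `p`. -/

def sigmoidHomeomorph : ℝ ≃ₜ Ioo (0 : ℝ) 1 :=
  ((Real.sigmoid_strictMono.orderIso _).trans
    (OrderIso.setCongr _ _ Real.range_sigmoid)).toHomeomorph

section StarExt

variable {X : Type*} [TopologicalSpace X]

theorem starExt_stoneCechUnit (φ : ℝ ≃ₜ Ioo (0 : ℝ) 1) (f : C(X, ℝ)) (x : X) :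
    (starExt φ f (stoneCechUnit x) : ℝ) = φ (f x) :=
  congrArg Subtype.val (congrFun (stoneCechExtend_extends _) x)

theorem continuous_starExt (φ : ℝ ≃ₜ Ioo (0 : ℝ) 1) (f : C(X, ℝ)) :
    Continuous (starExt φ f) :=
  continuous_stoneCechExtend _

theorem starExt_eq_of_eqOn_preimage (φ : ℝ ≃ₜ Ioo (0 : ℝ) 1) {f g : C(X, ℝ)}
    {U : Set (StoneCech X)} (hU : IsOpen U) {p : StoneCech X} (hp : p ∈ U)
    (hfg : EqOn f g (stoneCechUnit ⁻¹' U)) :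
    starExt φ f p = starExt φ g p := by
  have hEq : EqOn (starExt φ f) (starExt φ g) (U ∩ range stoneCechUnit) := by
    rintro _ ⟨hxU, x, rfl⟩
    exact Subtype.ext (by rw [starExt_stoneCechUnit, starExt_stoneCechUnit, hfg hxU])
  exact hEq.closure (continuous_starExt φ f) (continuous_starExt φ g)
    (denseRange_stoneCechUnit.open_subset_closure_inter hU hp)

theorem realAt_congr_of_eqOn_preimage {f g : C(X, ℝ)} {U : Set (StoneCech X)} (hU : IsOpen U)
    {p : StoneCech X} (hp : p ∈ U) (hfg : EqOn f g (stoneCechUnit ⁻¹' U)) :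
    RealAt f p ↔ RealAt g p :=
  forall_congr' fun φ => by rw [starExt_eq_of_eqOn_preimage φ hU hp hfg]

theorem realAt_stoneCechUnit (f : C(X, ℝ)) (x : X) : RealAt f (stoneCechUnit x) := fun φ => by
  rw [starExt_stoneCechUnit]
  exact (φ (f x)).2

theorem realAt_const (c : ℝ) (p : StoneCech X) : RealAt (ContinuousMap.const X c) p := by
  intro φ
  have hconst :
      starExt φ (ContinuousMap.const X c) = fun _ => ⟨φ c, (φ c).2.1.le, (φ c).2.2.le⟩ :=
    (continuous_starExt φ _).ext_on denseRange_stoneCechUnit continuous_const <| by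
      rintro _ ⟨x, rfl⟩
      exact Subtype.ext (starExt_stoneCechUnit φ _ x)
  rw [hconst]
  exact (φ c).2

theorem RealAt.exists_extension {f : C(X, ℝ)} {p : StoneCech X} (h : RealAt f p) :
    ∃ g : C(((insert p (range (stoneCechUnit : X → StoneCech X))) : Set (StoneCech X)), ℝ),
      ∀ x : X, g ⟨stoneCechUnit x, mem_insert_of_mem _ ⟨x, rfl⟩⟩ = f x := by
  set φ := sigmoidHomeomorph
  have hmem : ∀ q : (insert p (range (stoneCechUnit : X → StoneCech X)) : Set (StoneCech X)),
      (starExt φ f q : ℝ) ∈ Ioo (0 : ℝ) 1 := by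
    rintro ⟨q, rfl | ⟨x, rfl⟩⟩
    exacts [h φ, realAt_stoneCechUnit f x φ]
  refine ⟨⟨fun q => φ.symm ⟨starExt φ f q, hmem q⟩, ?_⟩, fun x => ?_⟩
  · exact φ.symm.continuous.comp <| Continuous.subtype_mk
      (continuous_subtype_val.comp ((continuous_starExt φ f).comp continuous_subtype_val)) _
  · exact φ.symm_apply_eq.2 (Subtype.ext (starExt_stoneCechUnit φ f x))

end StarExt

theorem exists_continuous_eqOn_one_nhds_disjoint_tsupport {Y : Type*} [TopologicalSpace Y]
    [NormalSpace Y] [T1Space Y] {K : Set Y} (hK : IsClosed K) {p : Y} (hp : p ∉ K) :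
    ∃ h : C(Y, ℝ), ∃ U, IsOpen U ∧ p ∈ U ∧ EqOn h 1 U ∧ Disjoint (tsupport h) K := by
  obtain ⟨V, hV, hpV, hVK⟩ :=
    normal_exists_closure_subset isClosed_singleton hK.isOpen_compl (singleton_subset_iff.2 hp)
  obtain ⟨U, hU, hpU, hUV⟩ :=
    normal_exists_closure_subset isClosed_singleton hV hpV
  obtain ⟨h, hV0, hU1, -⟩ := exists_continuous_zero_one_of_isClosed hV.isClosed_compl
    isClosed_closure (disjoint_compl_left_iff_subset.2 hUV)
  refine ⟨h, U, hU, singleton_subset_iff.1 hpU, hU1.mono subset_closure, ?_⟩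
  have hsupp : Function.support h ⊆ V := fun y hy => by_contra fun hyV => hy (hV0 hyV)
  exact subset_compl_iff_disjoint_right.1 ((closure_mono hsupp).trans hVK)

section Hard

variable {X : Type*} [TopologicalSpace X]

theorem stoneCechUnit_mem_closure_image_iff [CompletelyRegularSpace X] {H : Set X}
    (hH : IsClosed H) {x : X} :
    stoneCechUnit x ∈ closure (stoneCechUnit '' H) ↔ x ∈ H := by
  rw [← mem_preimage, ← isInducing_stoneCechUnit.closure_eq_preimage_closure_image, hH.closure_eq]

theorem isHard_of_disjoint_closure_image [CompletelyRegularSpace X] {H : Set X} (hH : IsClosed H)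
    (hK : Disjoint (closure (stoneCechUnit '' H)) (KSet X)) : IsHard H := by
  rintro q ⟨hqH, ⟨x, rfl⟩ | hqK⟩
  · exact ⟨x, (stoneCechUnit_mem_closure_image_iff hH).1 hqH, rfl⟩
  · exact absurd hqK (hK.notMem_of_mem_left hqH)

theorem IsHard.notMem_closure_image {H : Set X} (hH : IsHard H) {p : StoneCech X}
    (hpK : p ∈ KSet X) (hpX : p ∉ range stoneCechUnit) : p ∉ closure (stoneCechUnit '' H) :=
  fun hp => hpX (image_subset_range _ _ (hH ⟨hp, Or.inr hpK⟩))

theorem realAt_of_mem_CHSet {f : C(X, ℝ)} (hf : f ∈ CHSet X) {p : StoneCech X}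
    (hpK : p ∈ KSet X) (hpX : p ∉ range stoneCechUnit) : RealAt f p := by
  refine (realAt_congr_of_eqOn_preimage isClosed_closure.isOpen_compl
    (IsHard.notMem_closure_image hf hpK hpX) fun x hx => ?_).2 (realAt_const 0 p)
  by_contra hfx
  exact hx (subset_closure (mem_image_of_mem _ (subset_closure hfx)))

theorem exists_mem_CHSet_eqOn_preimage_nhds [CompletelyRegularSpace X] {p : StoneCech X}
    (hp : p ∉ KSet X) (f₀ : C(X, ℝ)) :
    ∃ f ∈ CHSet X, ∃ U, IsOpen U ∧ p ∈ U ∧ EqOn f f₀ (stoneCechUnit ⁻¹' U) := by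
  obtain ⟨h, U, hU, hpU, hU1, hhK⟩ :=
    exists_continuous_eqOn_one_nhds_disjoint_tsupport isClosed_closure hp
  let ι : C(X, StoneCech X) := ⟨stoneCechUnit, continuous_stoneCechUnit⟩
  refine ⟨h.comp ι * f₀, ?_, U, hU, hpU, fun x hx => by simp [ι, hU1 hx]⟩
  have hsupp : tsupport (h.comp ι * f₀) ⊆ stoneCechUnit ⁻¹' tsupport h :=
    tsupport_mul_subset_left.trans (tsupport_comp_subset_preimage h continuous_stoneCechUnit)
  refine isHard_of_disjoint_closure_image isClosed_closure (hhK.mono_left ?_)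
  exact closure_minimal (image_subset_iff.2 hsupp) isClosed_closure

end Hard

/-- For a Tychonoff space `X`, `υ_{C_H} X = X ∪ K`, where
`υ_{C_H} X = {p ∈ βX : f*(p) ∈ ℝ for all f ∈ C_H(X)}` and `K = cl_{βX}(υX \ X)`. -/
theorem upsilon_CH_eq_union_K
    (X : Type*) [TopologicalSpace X] [T35Space X] :
    upsilonOf (CHSet X) = Set.range (stoneCechUnit : X → StoneCech X) ∪ KSet X := by
  ext p
  constructor
  · intro hp
    by_contra hpXK
    obtain ⟨hpX, hpK⟩ := not_or.1 hpXK
    have hpυ : p ∉ hewittSet X := fun hpυ => hpK (subset_closure ⟨hpυ, hpX⟩)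
    obtain ⟨f₀, hf₀⟩ := not_forall.1 hpυ
    obtain ⟨f, hf, U, hU, hpU, hfU⟩ := exists_mem_CHSet_eqOn_preimage_nhds hpK f₀
    exact hf₀ ((realAt_congr_of_eqOn_preimage hU hpU hfU).1 (hp f hf)).exists_extension
  · intro hpXK f hf
    by_cases hpX : p ∈ range stoneCechUnit
    · obtain ⟨x, rfl⟩ := hpX
      exact realAt_stoneCechUnit f x
    · exact realAt_of_mem_CHSet hf (hpXK.resolve_left hpX) hpX
end
end
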